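/- There exists a Hilbert C*-module X over a commutative C*-algebra B and two orthogonally complemented closed submodules M, N ⊆ X such that M ∩ N is not orthogonally complemented in X. -/

import Mathlib

/-!
Over `A = C([-1, 1], ℂ)` take `X = A ⊕ A`, `M = A·(1, 0)` and `N = A·(cos t⁺, sin t⁺)`; both are
ranges of projections, hence complemented. `M ∩ N` consists of the `(f, 0)` with `f = 0` on
`t > 0`, while `(t⁻, 0) ∈ M ∩ N`, so anything orthogonal to `M ∩ N` has first coordinate vanishing
on `t < 0`. Splitting `(1, 0) = k + p` and evaluating the first coordinates at `t = 0`, continuity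
forces `k₁(0) = p₁(0) = 0`, contradicting `k₁ + p₁ = 1`.
-/

/-- The class `CStarModule` as it stood in Mathlib of December 2024 (right action of `Aᵐᵒᵖ`,
inner product `A`-linear on the right); Mathlib's current `CStarModule` uses a left action. -/
class CStarModuleOld (A E : Type*) [NonUnitalSemiring A] [StarRing A]
    [Module ℂ A] [AddCommGroup E] [Module ℂ E] [PartialOrder A] [SMul Aᵐᵒᵖ E] [Norm A] [Norm E]
    extends Inner A E where
  inner_add_right {x} {y} {z} : inner x (y + z) = inner x y + inner x z
  inner_self_nonneg {x} : 0 ≤ inner x x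
  inner_self {x} : inner x x = 0 ↔ x = 0
  inner_op_smul_right {a : A} {x y : E} : inner x (MulOpposite.op a • y) = inner x y * a
  inner_smul_right_complex {z : ℂ} {x} {y} : inner x (z • y) = z • inner x y
  star_inner x y : star (inner x y) = inner y x
  norm_eq_sqrt_norm_inner_self x : ‖x‖ = √‖inner x x‖

/-- A subset `K` of a Hilbert C*-module `X` over `B` is a (closed) submodule if it is
topologically closed, contains `0`, and is stable under addition, complex scalar
multiplication and the right `B`-action. -/
def IsClosedSubmodule {B X : Type} [NonUnitalSemiring B] [StarRing B] [Module ℂ B]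
    [NormedAddCommGroup X] [Module ℂ X] [PartialOrder B] [SMul Bᵐᵒᵖ X] [Norm B]
    [CStarModuleOld B X] (K : Set X) : Prop :=
  IsClosed K ∧ (0 : X) ∈ K ∧ (∀ a ∈ K, ∀ b ∈ K, a + b ∈ K) ∧
    (∀ (c : ℂ), ∀ a ∈ K, c • a ∈ K) ∧ (∀ (b : Bᵐᵒᵖ), ∀ a ∈ K, b • a ∈ K)

/-- A subset `K` of a Hilbert C*-module `X` over `B` is orthogonally complemented if
`X = K + K^⊥`, i.e. every element splits as a sum of an element of `K` and an element
orthogonal to `K`. -/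
def IsOrthoComplemented {B X : Type} [NonUnitalSemiring B] [StarRing B] [Module ℂ B]
    [NormedAddCommGroup X] [Module ℂ X] [PartialOrder B] [SMul Bᵐᵒᵖ X] [Norm B]
    [CStarModuleOld B X] (K : Set X) : Prop :=
  ∀ x : X, ∃ k ∈ K, ∃ p : X, (∀ m ∈ K, (inner B p m : B) = 0) ∧ x = k + p

open WithCStarModule Set

theorem IsClosedSubmodule.inter {B X : Type} [NonUnitalSemiring B] [StarRing B] [Module ℂ B]
    [NormedAddCommGroup X] [Module ℂ X] [PartialOrder B] [SMul Bᵐᵒᵖ X] [Norm B]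
    [CStarModuleOld B X] {K L : Set X} (hK : IsClosedSubmodule (B := B) K)
    (hL : IsClosedSubmodule (B := B) L) : IsClosedSubmodule (B := B) (K ∩ L) :=
  ⟨hK.1.inter hL.1, ⟨hK.2.1, hL.2.1⟩,
    fun a ha b hb => ⟨hK.2.2.1 a ha.1 b hb.1, hL.2.2.1 a ha.2 b hb.2⟩,
    fun c a ha => ⟨hK.2.2.2.1 c a ha.1, hL.2.2.2.1 c a ha.2⟩,
    fun b a ha => ⟨hK.2.2.2.2 b a ha.1, hL.2.2.2.2 b a ha.2⟩⟩

theorem ContinuousMap.apply_eq_zero_of_mul_eq_zero {T R : Type*} [TopologicalSpace T]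
    [TopologicalSpace R] [T2Space R] [MulZeroClass R] [NoZeroDivisors R] [ContinuousMul R]
    {f g : C(T, R)} (hfg : f * g = 0) {a : T} (ha : a ∈ tsupport g) : f a = 0 := by
  have : EqOn f 0 (Function.support g) := fun t ht =>
    (mul_eq_zero.mp (DFunLike.congr_fun hfg t)).resolve_right ht
  exact this.closure f.continuous continuous_const ha

namespace WithCStarModule

variable {A : Type} [CommCStarAlgebra A]

@[fun_prop]
theorem continuous_fst_prod : Continuous fun x : C⋆ᵐᵒᵈ(A, A × A) => x.1 :=
  continuous_fst.comp uniformEquiv.continuous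

@[fun_prop]
theorem continuous_snd_prod : Continuous fun x : C⋆ᵐᵒᵈ(A, A × A) => x.2 :=
  continuous_snd.comp uniformEquiv.continuous

theorem op_smul_fst (b : A) (x : C⋆ᵐᵒᵈ(A, A × A)) : (MulOpposite.op b • x).1 = x.1 * b := rfl

theorem op_smul_snd (b : A) (x : C⋆ᵐᵒᵈ(A, A × A)) : (MulOpposite.op b • x).2 = x.2 * b := rfl

/-- For self-adjoint `u₁, u₂` with `u₁² + u₂² = 1` this is the line `{(b u₁, b u₂) | b ∈ A}`,
the range of the projection `[[u₁², u₁u₂], [u₁u₂, u₂²]]`. -/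
def line (u₁ u₂ : A) : Set C⋆ᵐᵒᵈ(A, A × A) := {x | u₂ * x.1 = u₁ * x.2}

variable [PartialOrder A] [StarOrderedRing A]

noncomputable instance : CStarModuleOld A C⋆ᵐᵒᵈ(A, A × A) where
  inner_add_right := CStarModule.inner_add_right
  inner_self_nonneg := CStarModule.inner_self_nonneg
  inner_self := CStarModule.inner_self
  inner_op_smul_right {a x y} := by
    change (y.1 * a) * star x.1 + (y.2 * a) * star x.2 = (y.1 * star x.1 + y.2 * star x.2) * a
    ring
  inner_smul_right_complex := CStarModule.inner_smul_right_complex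
  star_inner := CStarModule.star_inner
  norm_eq_sqrt_norm_inner_self := CStarModule.norm_eq_sqrt_norm_inner_self

theorem inner_prod_eq (x y : C⋆ᵐᵒᵈ(A, A × A)) :
    (inner A x y : A) = star x.1 * y.1 + star x.2 * y.2 := by
  change y.1 * star x.1 + y.2 * star x.2 = _
  ring

theorem isClosedSubmodule_line (u₁ u₂ : A) : IsClosedSubmodule (B := A) (line u₁ u₂) := by
  refine ⟨isClosed_eq (by fun_prop) (by fun_prop), by simp [line], ?_, ?_, ?_⟩
  · intro a ha b hb
    simp only [line, mem_ofPred_eq, add_fst, add_snd, mul_add, ha.out, hb.out] at *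
  · intro c a ha
    simp only [line, mem_ofPred_eq, smul_fst, smul_snd, mul_smul_comm, ha.out] at *
  · intro b a ha
    rw [← MulOpposite.op_unop b]
    simp only [line, mem_ofPred_eq, op_smul_fst, op_smul_snd, ← mul_assoc, ha.out] at *

theorem isOrthoComplemented_line {u₁ u₂ : A} (h₁ : IsSelfAdjoint u₁) (h₂ : IsSelfAdjoint u₂)
    (hu : u₁ * u₁ + u₂ * u₂ = 1) : IsOrthoComplemented (B := A) (line u₁ u₂) := by
  intro x
  set b := u₁ * x.1 + u₂ * x.2
  let k : C⋆ᵐᵒᵈ(A, A × A) := (equiv A (A × A)).symm (b * u₁, b * u₂)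
  refine ⟨k, show u₂ * (b * u₁) = u₁ * (b * u₂) by ring, x - k, fun m hm => ?_, by abel⟩
  have hm : u₂ * m.1 = u₁ * m.2 := hm
  rw [inner_prod_eq, sub_fst, sub_snd]
  simp only [k, equiv_symm_fst, equiv_symm_snd, b, star_sub, star_mul, star_add, h₁.star_eq,
    h₂.star_eq]
  linear_combination (u₂ * star x.1 - u₁ * star x.2) * hm - (star x.1 * m.1 + star x.2 * m.2) * hu

end WithCStarModule

open scoped ComplexOrder

local notation "𝕀" => Icc (-1 : ℝ) 1

theorem zero_mem_closure_setOf_pos : (⟨0, by norm_num⟩ : 𝕀) ∈ closure {t : 𝕀 | 0 < t.1} := by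
  rw [closure_subtype]
  refine closure_mono (s := Ioo 0 1) (fun t ht => ?_) (by simp [closure_Ioo])
  exact ⟨⟨t, by linarith [ht.1], ht.2.le⟩, ht.1, rfl⟩

theorem zero_mem_closure_setOf_neg : (⟨0, by norm_num⟩ : 𝕀) ∈ closure {t : 𝕀 | t.1 < 0} := by
  rw [closure_subtype]
  refine closure_mono (s := Ioo (-1) 0) (fun t ht => ?_) (by simp [closure_Ioo])
  exact ⟨⟨t, ht.1.le, by linarith [ht.2]⟩, ht.2, rfl⟩

noncomputable def cosPosPart : C(𝕀, ℂ) := ⟨fun t => Real.cos (max t.1 0), by fun_prop⟩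

noncomputable def sinPosPart : C(𝕀, ℂ) := ⟨fun t => Real.sin (max t.1 0), by fun_prop⟩

noncomputable def negPartMap : C(𝕀, ℂ) := ⟨fun t => (max (-t.1) 0 : ℝ), by fun_prop⟩

theorem isSelfAdjoint_cosPosPart : IsSelfAdjoint cosPosPart := by
  ext t
  simp only [cosPosPart, ContinuousMap.star_apply, ContinuousMap.coe_mk, Complex.star_def,
    Complex.conj_ofReal]

theorem isSelfAdjoint_sinPosPart : IsSelfAdjoint sinPosPart := by
  ext t
  simp only [sinPosPart, ContinuousMap.star_apply, ContinuousMap.coe_mk, Complex.star_def,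
    Complex.conj_ofReal]

theorem cosPosPart_mul_self_add_sinPosPart_mul_self :
    cosPosPart * cosPosPart + sinPosPart * sinPosPart = 1 := by
  ext t
  simp only [cosPosPart, sinPosPart, ContinuousMap.add_apply, ContinuousMap.mul_apply,
    ContinuousMap.coe_mk, ContinuousMap.one_apply]
  norm_cast
  linear_combination Real.cos_sq_add_sin_sq (max t.1 0)

theorem sinPosPart_mul_negPartMap : sinPosPart * negPartMap = 0 := by
  ext t
  rcases le_total t.1 0 with ht | ht <;>
    simp [sinPosPart, negPartMap, ht]

theorem setOf_pos_subset_support_sinPosPart :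
    {t : 𝕀 | 0 < t.1} ⊆ Function.support sinPosPart := fun t ht => by
  have : Real.sin t ≠ 0 :=
    (Real.sin_pos_of_pos_of_lt_pi ht (t.2.2.trans_lt (by linarith [Real.pi_gt_three]))).ne'
  simpa only [Function.mem_support, sinPosPart, ContinuousMap.coe_mk, max_eq_left ht.out.le,
    Complex.ofReal_ne_zero]

theorem setOf_neg_subset_support_negPartMap :
    {t : 𝕀 | t.1 < 0} ⊆ Function.support negPartMap := fun t ht => by
  simpa [negPartMap] using ht.out

theorem not_isOrthoComplemented_line_inter_line :
    ¬ IsOrthoComplemented (B := C(𝕀, ℂ)) (line 1 0 ∩ line cosPosPart sinPosPart) := by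
  intro h
  obtain ⟨k, ⟨hkM, hkN⟩, p, hp, hx⟩ := h ((equiv _ _).symm (1, 0))
  have hk₂ : k.2 = 0 := by simpa [line] using hkM.out.symm
  have hk₁ : k.1 ⟨0, by norm_num⟩ = 0 := by
    have hk : k.1 * sinPosPart = 0 := by
      simpa [line, hk₂, mul_comm] using hkN.out
    exact ContinuousMap.apply_eq_zero_of_mul_eq_zero hk
      (closure_mono setOf_pos_subset_support_sinPosPart zero_mem_closure_setOf_pos)
  have hp₁ : p.1 ⟨0, by norm_num⟩ = 0 := by
    have hneg : (equiv _ _).symm (negPartMap, 0) ∈ line 1 0 ∩ line cosPosPart sinPosPart :=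
      ⟨by simp [line], by simp [line, sinPosPart_mul_negPartMap]⟩
    have hp : star p.1 * negPartMap = 0 := by
      simpa [inner_prod_eq] using hp _ hneg
    simpa using ContinuousMap.apply_eq_zero_of_mul_eq_zero hp
      (closure_mono setOf_neg_subset_support_negPartMap zero_mem_closure_setOf_neg)
  have := congrArg (fun x => x.1 ⟨0, by norm_num⟩) hx
  simp [equiv_symm_fst, add_fst, hk₁, hp₁] at this

/-- The intersection of orthogonally complemented submodules of a Hilbert C*-module need
not be orthogonally complemented. -/
theorem exists_intersection_not_complemented :
    ∃ (B : Type) (_ : CommCStarAlgebra B) (X : Type) (_ : NormedAddCommGroup X)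
      (_ : Module ℂ X) (_ : PartialOrder B) (_ : SMul Bᵐᵒᵖ X) (_ : CStarModuleOld B X)
      (_ : CompleteSpace X) (M N : Set X),
      IsClosedSubmodule (B := B) M ∧ IsClosedSubmodule (B := B) N ∧
      IsOrthoComplemented (B := B) M ∧ IsOrthoComplemented (B := B) N ∧
      IsClosedSubmodule (B := B) (M ∩ N) ∧
      ¬ IsOrthoComplemented (B := B) (M ∩ N) :=
  ⟨C(𝕀, ℂ), inferInstance, C⋆ᵐᵒᵈ(C(𝕀, ℂ), C(𝕀, ℂ) × C(𝕀, ℂ)), inferInstance, inferInstance,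
    inferInstance, inferInstance, inferInstance, inferInstance, line 1 0,
    line cosPosPart sinPosPart, isClosedSubmodule_line _ _, isClosedSubmodule_line _ _,
    isOrthoComplemented_line (.one _) (.zero _) (by simp),
    isOrthoComplemented_line isSelfAdjoint_cosPosPart isSelfAdjoint_sinPosPart
      cosPosPart_mul_self_add_sinPosPart_mul_self,
    (isClosedSubmodule_line _ _).inter (isClosedSubmodule_line _ _),
    not_isOrthoComplemented_line_inter_line⟩
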